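/- Let R be a right-flat right-linear TRS, and suppose s = s[f(s_1,…,s_m)]_{p̄} rewrites to t at position p̄ with rule f(l_1,…,l_m) → r, and ‖s‖ = ‖t‖, where ‖u‖ counts the positions of u whose subterms are not reachable from a constant. Then for every i ∈ {1,…,m}, if s_i is not reachable from a constant, then l_i is a variable. -/

import Mathlib

/-- First-order terms over function symbols `F` and variables `V`. -/
inductive Tm (F V : Type) : Type
  | var : V → Tm F V
  | app : F → List (Tm F V) → Tm F V

namespace Tm

variable {F V : Type}

/-- Height of a term: 0 for variables and constants. -/
def height : Tm F V → ℕ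
  | var _ => 0
  | app _ ts => ts.attach.foldr (fun t m => max (height t.1 + 1) m) 0
decreasing_by all_goals (simp_wf; have := List.sizeOf_lt_of_mem t.2; omega)

/-- Size (number of positions) of a term. -/
def size : Tm F V → ℕ
  | var _ => 1
  | app _ ts => 1 + (ts.attach.map (fun t => size t.1)).sum
decreasing_by all_goals (simp_wf; have := List.sizeOf_lt_of_mem t.2; omega)

/-- Apply a substitution. -/
def subst (σ : V → Tm F V) : Tm F V → Tm F V
  | var x => σ x
  | app f ts => app f (ts.attach.map (fun t => subst σ t.1))
decreasing_by all_goals (simp_wf; have := List.sizeOf_lt_of_mem t.2; omega)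

/-- List of variable occurrences. -/
def varList : Tm F V → List V
  | var x => [x]
  | app _ ts => (ts.attach.map (fun t => varList t.1)).flatten
decreasing_by all_goals (simp_wf; have := List.sizeOf_lt_of_mem t.2; omega)

/-- List of function-symbol occurrences. -/
def symList : Tm F V → List F
  | var _ => []
  | app f ts => f :: (ts.attach.map (fun t => symList t.1)).flatten
decreasing_by all_goals (simp_wf; have := List.sizeOf_lt_of_mem t.2; omega)

/-- The subterm at a position (positions are lists of argument indices). -/
def subAt : Tm F V → List ℕ → Option (Tm F V)
  | t, [] => some t
  | var _, _ :: _ => none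
  | app _ ts, i :: p => match ts[i]? with
      | some u => subAt u p
      | none => none

/-- Replace the subterm at a position. -/
def replAt : Tm F V → List ℕ → Tm F V → Option (Tm F V)
  | _, [], s => some s
  | var _, _ :: _, _ => none
  | app f ts, i :: p, s => match ts[i]? with
      | some u => (replAt u p s).map (fun u' => app f (ts.set i u'))
      | none => none

/-- `p` is a position of `t`. -/
def IsPos (t : Tm F V) (p : List ℕ) : Prop := (t.subAt p).isSome

/-- A term is a constant if it is a nullary function application. -/
def IsConst (t : Tm F V) : Prop := ∃ f : F, t = app f []

def Ground (t : Tm F V) : Prop := t.varList = []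

/-- A term is linear if each variable occurs at most once. -/
def Linear (t : Tm F V) : Prop := t.varList.Nodup

/-- A term is flat if its height is at most 1. -/
def Flat (t : Tm F V) : Prop := t.height ≤ 1

/-- A term is shallow if all variables occur at depth at most 1. -/
def Shallow (t : Tm F V) : Prop :=
  ∀ (p : List ℕ) (x : V), t.subAt p = some (var x) → p.length ≤ 1

end Tm

/-- A rewrite rule. -/
structure Rule (F V : Type) where
  lhs : Tm F V
  rhs : Tm F V

namespace Rule

variable {F V : Type}

/-- Standard well-formedness: the lhs is not a variable and variables of the
rhs occur in the lhs. -/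
def WF (r : Rule F V) : Prop :=
  (∀ x : V, r.lhs ≠ Tm.var x) ∧ ∀ x ∈ r.rhs.varList, x ∈ r.lhs.varList

def RightFlat (r : Rule F V) : Prop := r.rhs.Flat
def RightLinear (r : Rule F V) : Prop := r.rhs.Linear
def RightShallow (r : Rule F V) : Prop := r.rhs.Shallow
def FlatRule (r : Rule F V) : Prop := r.lhs.Flat ∧ r.rhs.Flat
def ShallowRule (r : Rule F V) : Prop := r.lhs.Shallow ∧ r.rhs.Shallow
def Collapsing (r : Rule F V) : Prop := ∃ x : V, r.rhs = Tm.var x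

/-- A permutative rule: linear, flat, height-preserving and variable-preserving. -/
def Permutative (r : Rule F V) : Prop :=
  r.WF ∧ r.lhs.Linear ∧ r.rhs.Linear ∧ r.lhs.Flat ∧ r.rhs.Flat ∧
    r.lhs.height = r.rhs.height ∧ ∀ x : V, x ∈ r.lhs.varList ↔ x ∈ r.rhs.varList

end Rule

/-- A permutative theory: a symmetric set of permutative rules. -/
def PermutativeTheory {F V : Type} (E : Set (Rule F V)) : Prop :=
  (∀ r ∈ E, r.Permutative) ∧ ∀ r ∈ E, (⟨r.rhs, r.lhs⟩ : Rule F V) ∈ E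

section Rewriting

variable {F V : Type}

/-- One rewrite step with rule `l → r` at position `p` using substitution `σ`. -/
def RewWith (l r : Tm F V) (p : List ℕ) (σ : V → Tm F V) (s t : Tm F V) : Prop :=
  s.subAt p = some (l.subst σ) ∧ s.replAt p (r.subst σ) = some t

/-- One rewrite step with TRS `R` at position `p`. -/
def RewAt (R : Set (Rule F V)) (p : List ℕ) (s t : Tm F V) : Prop :=
  ∃ r ∈ R, ∃ σ : V → Tm F V, RewWith r.lhs r.rhs p σ s t

/-- One rewrite step with TRS `R`. -/
def Rew (R : Set (Rule F V)) (s t : Tm F V) : Prop := ∃ p, RewAt R p s t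

/-- Reachability: reflexive-transitive closure of one-step rewriting. -/
def Reach (R : Set (Rule F V)) : Tm F V → Tm F V → Prop :=
  Relation.ReflTransGen (Rew R)

/-- One rewrite step with `R` modulo `E` : `s →E* · →R · →E* t`. -/
def RewMod (R E : Set (Rule F V)) (s t : Tm F V) : Prop :=
  ∃ u v, Reach E s u ∧ Rew R u v ∧ Reach E v t

/-- `R/E` is terminating from `s`. -/
def TerminatingFrom (R E : Set (Rule F V)) (s : Tm F V) : Prop :=
  ¬ ∃ f : ℕ → Tm F V, f 0 = s ∧ ∀ n, RewMod R E (f n) (f (n + 1))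

/-- `R/E` is terminating. -/
def Terminating (R E : Set (Rule F V)) : Prop :=
  ¬ ∃ f : ℕ → Tm F V, ∀ n, RewMod R E (f n) (f (n + 1))

/-- `t` is reachable from some constant. -/
def FromConst (R : Set (Rule F V)) (t : Tm F V) : Prop :=
  ∃ f : F, Reach R (Tm.app f []) t

/-- The measure `‖t‖`: number of positions of `t` whose subterm is not reachable
from a constant. -/
noncomputable def meas (R : Set (Rule F V)) (t : Tm F V) : ℕ :=
  Nat.card {p : List ℕ // ∃ u, t.subAt p = some u ∧ ¬ FromConst R u}

/-- `t` is a normal form w.r.t. `R/E`. -/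
def NFMod (R E : Set (Rule F V)) (t : Tm F V) : Prop := ¬ ∃ t', RewMod R E t t'

/-- `t` is `R`-irreducible. -/
def NF (R : Set (Rule F V)) (t : Tm F V) : Prop := ¬ ∃ t', Rew R t t'

/-- Innermost rewrite step with `R` (plain rewriting): all proper subterms of the
redex are irreducible. -/
def IRew (R : Set (Rule F V)) (s t : Tm F V) : Prop :=
  ∃ p, RewAt R p s t ∧
    ∀ (q : List ℕ) (w : Tm F V), q ≠ [] → s.subAt (p ++ q) = some w → NF R w

/-- Innermost rewrite step with `R` modulo `E`. -/
def IRewMod (R E : Set (Rule F V)) (s t : Tm F V) : Prop :=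
  ∃ u v, ∃ p : List ℕ, Reach E s u ∧ RewAt R p u v ∧ Reach E v t ∧
    ∀ (q : List ℕ) (w : Tm F V), q ≠ [] → u.subAt (p ++ q) = some w → NFMod R E w

/-- Innermost termination of `R/E`. -/
def ITerminating (R E : Set (Rule F V)) : Prop :=
  ¬ ∃ f : ℕ → Tm F V, ∀ n, IRewMod R E (f n) (f (n + 1))

end Rewriting

section Marking

variable {F V : Type}

/-- A derivation of length `n` with explicit rules, positions and substitutions. -/
def IsDeriv (R : Set (Rule F V)) (n : ℕ) (s : ℕ → Tm F V) (rl : ℕ → Rule F V)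
    (pp : ℕ → List ℕ) (sb : ℕ → V → Tm F V) : Prop :=
  ∀ i < n, rl i ∈ R ∧ RewWith (rl i).lhs (rl i).rhs (pp i) (sb i) (s i) (s (i + 1))

/-- `p'` is strictly below `p̄` : `p̄` is a proper prefix of `p'`. -/
def StrictBelow (pbar p : List ℕ) : Prop := ∃ q, q ≠ [] ∧ p = pbar ++ q

/-- A marking of a derivation. -/
def IsMarking (n : ℕ) (s : ℕ → Tm F V) (rl : ℕ → Rule F V)
    (pp : ℕ → List ℕ) (M : ℕ → List ℕ → Tm F V) : Prop :=
  (∀ p t, (s 0).subAt p = some t → M 0 p = t) ∧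
  ∀ i < n,
    (∀ p, (s (i + 1)).IsPos p → ¬ StrictBelow (pp i) p → M (i + 1) p = M i p) ∧
    (∀ (j : ℕ) (u : Tm F V), (rl i).rhs.subAt [j] = some u → u.IsConst →
        M (i + 1) (pp i ++ [j]) = u) ∧
    (∀ (j : ℕ) (p₁ : List ℕ) (x : V), (rl i).rhs.subAt [j] = some (Tm.var x) →
        (s (i + 1)).IsPos (pp i ++ j :: p₁) →
        ∃ q₀ : List ℕ, (rl i).lhs.subAt q₀ = some (Tm.var x) ∧
          M (i + 1) (pp i ++ j :: p₁) = M i (pp i ++ q₀ ++ p₁))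

end Marking

section WFSig

variable {F V : Type}

/-- Terms respecting the arity function. -/
inductive WFT (ar : F → ℕ) : Tm F V → Prop
  | var (x : V) : WFT ar (Tm.var x)
  | app (f : F) (ts : List (Tm F V)) : ts.length = ar f →
      (∀ t ∈ ts, WFT ar t) → WFT ar (Tm.app f ts)

end WFSig

/-!
A step `s → t` with `l → r` at `pbar` lets us trace every position of `t` whose subterm is not
reachable from a constant back to such a position of `s`. Outside the redex the subterm is
unchanged, or (above `pbar`) it is the result of one `R`-step, and reachability from a
constant is closed under steps. Inside the contractum `rσ`, flatness of `r` forces the position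
to run through `σ x` for a variable `x` of `r`, and it is traced to the same position below an
occurrence of `x` in `l`. Linearity of `r` makes the tracing injective. When `sᵢ` is not
reachable from a constant but `lᵢ` is not a variable, the position `pbar ++ [i]` of `s` is
missed, so `‖t‖ < ‖s‖`.
-/

namespace Tm

variable {F V : Type}

@[simp] theorem subst_var (σ : V → Tm F V) (x : V) : (var x).subst σ = σ x := by
  rw [subst]

@[simp] theorem subst_app (σ : V → Tm F V) (f : F) (ts : List (Tm F V)) :
    (app f ts).subst σ = app f (ts.map (subst σ)) := by
  rw [subst]; simp

theorem varList_app (f : F) (ts : List (Tm F V)) :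
    (app f ts).varList = (ts.map varList).flatten := by
  rw [varList]; simp

theorem height_lt_of_mem {f : F} {ts : List (Tm F V)} {u : Tm F V} (hu : u ∈ ts) :
    u.height < (app f ts).height := by
  rw [height]
  suffices ∀ l : List {x // x ∈ ts}, ⟨u, hu⟩ ∈ l →
      u.height < l.foldr (fun t m => max (height t.1 + 1) m) 0 from this _ (List.mem_attach _ _)
  intro l hl
  induction l with
  | nil => simp at hl
  | cons b l ih =>
    rcases List.mem_cons.1 hl with rfl | h
    · simp
    · exact lt_max_of_lt_right (ih h)

@[simp] theorem subAt_nil (u : Tm F V) : u.subAt [] = some u := by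
  rw [subAt]

@[simp] theorem subAt_var_cons (x : V) (i : ℕ) (p : List ℕ) :
    (var x : Tm F V).subAt (i :: p) = none := by
  rw [subAt]

@[simp] theorem subAt_app_cons (f : F) (ts : List (Tm F V)) (i : ℕ) (p : List ℕ) :
    (app f ts).subAt (i :: p) = ts[i]?.bind (subAt · p) := by
  rw [subAt]; cases ts[i]? <;> rfl

theorem subAt_append (u : Tm F V) (p q : List ℕ) :
    u.subAt (p ++ q) = (u.subAt p).bind (subAt · q) := by
  induction p generalizing u with
  | nil => simp
  | cons i p ih =>
    cases u with
    | var x => simp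
    | app f ts => simp [ih, Option.bind_assoc]

theorem subAt_append_of_subAt {u w : Tm F V} {p : List ℕ} (h : u.subAt p = some w)
    (q : List ℕ) : u.subAt (p ++ q) = w.subAt q := by
  simp [subAt_append, h]

@[simp] theorem replAt_nil (u w : Tm F V) : u.replAt [] w = some w := by
  rw [replAt]

@[simp] theorem replAt_var_cons (x : V) (i : ℕ) (p : List ℕ) (w : Tm F V) :
    (var x : Tm F V).replAt (i :: p) w = none := by
  rw [replAt]

@[simp] theorem replAt_app_cons (f : F) (ts : List (Tm F V)) (i : ℕ) (p : List ℕ)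
    (w : Tm F V) : (app f ts).replAt (i :: p) w =
      ts[i]?.bind fun u => (u.replAt p w).map fun u' => app f (ts.set i u') := by
  rw [replAt]; cases ts[i]? <;> rfl

theorem subAt_of_replAt {u w t : Tm F V} {p : List ℕ} (h : u.replAt p w = some t) :
    t.subAt p = some w := by
  induction p generalizing u t with
  | nil => simpa using h.symm
  | cons i p ih =>
    cases u with
    | var x => simp at h
    | app f ts =>
      simp only [replAt_app_cons, Option.bind_eq_some_iff, Option.map_eq_some_iff] at h
      obtain ⟨v, hv, v', hr, rfl⟩ := h
      have hi : i < ts.length := (List.getElem?_eq_some_iff.1 hv).1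
      simpa [hi] using ih hr

theorem replAt_append {u w t u' : Tm F V} {p d : List ℕ} (h : u.replAt (p ++ d) w = some t)
    (hu : u.subAt p = some u') : ∃ t', u'.replAt d w = some t' ∧ t.subAt p = some t' := by
  induction p generalizing u t with
  | nil => simp only [subAt_nil, Option.some.injEq] at hu; subst hu; exact ⟨t, h, by simp⟩
  | cons i p ih =>
    cases u with
    | var x => simp at hu
    | app f ts =>
      simp only [List.cons_append, replAt_app_cons, Option.bind_eq_some_iff,
        Option.map_eq_some_iff] at h
      obtain ⟨v, hv, v', hr, rfl⟩ := h
      have hi : i < ts.length := (List.getElem?_eq_some_iff.1 hv).1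
      simp only [subAt_app_cons, hv, Option.bind_some] at hu
      simpa [hi] using ih hr hu

theorem subAt_replAt_of_not_prefix {u w t : Tm F V} {P p : List ℕ}
    (h : u.replAt P w = some t) (h₁ : ¬ P <+: p) (h₂ : ¬ p <+: P) :
    t.subAt p = u.subAt p := by
  induction P generalizing u t p with
  | nil => exact absurd List.nil_prefix h₁
  | cons i P ih =>
    cases p with
    | nil => exact absurd List.nil_prefix h₂
    | cons j p =>
      cases u with
      | var x => simp at h
      | app f ts =>
        simp only [replAt_app_cons, Option.bind_eq_some_iff, Option.map_eq_some_iff] at h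
        obtain ⟨v, hv, v', hr, rfl⟩ := h
        by_cases hij : i = j
        · subst hij
          obtain ⟨hi, rfl⟩ := List.getElem?_eq_some_iff.1 hv
          simp only [List.cons_prefix_cons, true_and] at h₁ h₂
          simp [hi, ih hr h₁ h₂]
        · simp [List.getElem?_set_ne hij]

theorem subAt_subst (σ : V → Tm F V) {u w : Tm F V} {q : List ℕ} (h : u.subAt q = some w) :
    (u.subst σ).subAt q = some (w.subst σ) := by
  induction q generalizing u with
  | nil => simp_all
  | cons i q ih =>
    cases u with
    | var x => simp at h
    | app f ts =>
      simp only [subAt_app_cons, Option.bind_eq_some_iff] at h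
      obtain ⟨v, hv, hw⟩ := h
      simpa [hv] using ih hw

theorem subAt_subst_eq_some (σ : V → Tm F V) {u w : Tm F V} {q : List ℕ}
    (h : (u.subst σ).subAt q = some w) :
    (∃ v, u.subAt q = some v ∧ w = v.subst σ) ∨
      ∃ qv x p, q = qv ++ p ∧ u.subAt qv = some (var x) ∧ (σ x).subAt p = some w := by
  induction q generalizing u with
  | nil => exact Or.inl ⟨u, rfl, by simpa using h.symm⟩
  | cons i q ih =>
    cases u with
    | var x => exact Or.inr ⟨[], x, i :: q, rfl, rfl, by simpa using h⟩
    | app f ts =>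
      simp only [subst_app, subAt_app_cons, List.getElem?_map, Option.bind_map,
        Option.bind_eq_some_iff, Function.comp_apply] at h
      obtain ⟨v, hv, hw⟩ := h
      rcases ih hw with ⟨v', h₁, h₂⟩ | ⟨qv, x, p, rfl, h₁, h₂⟩
      · exact Or.inl ⟨v', by simpa [hv] using h₁, h₂⟩
      · exact Or.inr ⟨i :: qv, x, p, rfl, by simpa [hv] using h₁, h₂⟩

theorem subAt_append_of_subAt_subst {u l : Tm F V} {σ : V → Tm F V} {p q : List ℕ} {x : V}
    (hu : u.subAt p = some (l.subst σ)) (hl : l.subAt q = some (var x)) (p₁ : List ℕ) :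
    u.subAt (p ++ q ++ p₁) = (σ x).subAt p₁ := by
  rw [subAt_append_of_subAt (subAt_append_of_subAt hu q ▸ subAt_subst σ hl), subst_var]

theorem mem_varList_of_subAt {u : Tm F V} {q : List ℕ} {x : V}
    (h : u.subAt q = some (var x)) : x ∈ u.varList := by
  induction q generalizing u with
  | nil => simp_all [varList]
  | cons i q ih =>
    cases u with
    | var y => simp at h
    | app f ts =>
      simp only [subAt_app_cons, Option.bind_eq_some_iff] at h
      obtain ⟨v, hv, hx⟩ := h
      rw [varList_app, List.mem_flatten]
      exact ⟨v.varList, List.mem_map_of_mem (List.mem_of_getElem? hv), ih hx⟩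

theorem exists_subAt_of_mem_varList : ∀ {u : Tm F V} {x : V},
    x ∈ u.varList → ∃ q, u.subAt q = some (var x)
  | var y, x, h => ⟨[], by simp_all [varList]⟩
  | app f ts, x, h => by
    rw [varList_app, List.mem_flatten] at h
    obtain ⟨_, hv, hx⟩ := h
    obtain ⟨v, hvts, rfl⟩ := List.mem_map.1 hv
    obtain ⟨q, hq⟩ := exists_subAt_of_mem_varList hx
    obtain ⟨i, hi, rfl⟩ := List.getElem_of_mem hvts
    exact ⟨i :: q, by simpa [hi] using hq⟩
termination_by u => u
decreasing_by have := List.sizeOf_lt_of_mem hvts; simp; omega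

theorem eq_of_subAt_var_of_prefix {u : Tm F V} {q q' : List ℕ} {x : V} {w : Tm F V}
    (h : u.subAt q = some (var x)) (h' : u.subAt q' = some w) (hq : q <+: q') : q = q' := by
  obtain ⟨d, rfl⟩ := hq
  cases d with
  | nil => simp
  | cons i d => simp [subAt_append_of_subAt h] at h'

theorem ne_nil_of_subAt_var {l : Tm F V} (hl : ∀ x, l ≠ var x) {q : List ℕ} {x : V}
    (h : l.subAt q = some (var x)) : q ≠ [] := by
  rintro rfl
  exact hl x (by simpa using h)

theorem Linear.eq_of_subAt_var : ∀ {u : Tm F V}, u.Linear →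
    ∀ {q q' : List ℕ} {x : V}, u.subAt q = some (var x) → u.subAt q' = some (var x) → q = q'
  | var y, _, [], [], _, _, _ => rfl
  | var y, _, _ :: _, _, _, h, _ | var y, _, _, _ :: _, _, _, h => by simp at h
  | app f ts, _, [], _, _, h, _ | app f ts, _, _, [], _, _, h => by simp at h
  | app f ts, hlin, i :: q, i' :: q', x, h, h' => by
    simp only [subAt_app_cons, Option.bind_eq_some_iff] at h h'
    obtain ⟨v, hv, hx⟩ := h
    obtain ⟨v', hv', hx'⟩ := h'
    obtain ⟨hi, rfl⟩ := List.getElem?_eq_some_iff.1 hv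
    obtain ⟨hi', rfl⟩ := List.getElem?_eq_some_iff.1 hv'
    have hnd : (ts.map varList).flatten.Nodup := varList_app f ts ▸ hlin
    obtain rfl : i = i' := by
      by_contra hne
      have hdisj := List.nodup_flatten.1 hnd |>.2
      rw [List.pairwise_iff_getElem] at hdisj
      rcases Nat.lt_or_gt_of_ne hne with hlt | hlt
      · exact hdisj i i' (by simpa) (by simpa) hlt
          (by simpa using mem_varList_of_subAt hx) (by simpa using mem_varList_of_subAt hx')
      · exact hdisj i' i (by simpa) (by simpa) hlt
          (by simpa using mem_varList_of_subAt hx') (by simpa using mem_varList_of_subAt hx)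
    have hvlin : ts[i].Linear :=
      (List.nodup_flatten.1 hnd).1 _ (List.mem_map_of_mem (List.getElem_mem hi))
    rw [hvlin.eq_of_subAt_var hx hx']
termination_by u => u
decreasing_by have := List.sizeOf_lt_of_mem (List.getElem_mem hi); simp; omega

theorem Flat.subAt_of_ne_nil {u v : Tm F V} (hu : u.Flat) {q : List ℕ} (hq : q ≠ [])
    (h : u.subAt q = some v) : (∃ x, v = var x) ∨ ∃ c, v = app c [] := by
  obtain ⟨i, q, rfl⟩ := List.exists_cons_of_ne_nil hq
  cases u with
  | var x => simp at h
  | app f ts =>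
    simp only [subAt_app_cons, Option.bind_eq_some_iff] at h
    obtain ⟨w, hw, h⟩ := h
    have hlt := height_lt_of_mem (f := f) (List.mem_of_getElem? hw)
    have hw0 : w.height = 0 := by unfold Flat at hu; omega
    cases w with
    | var x =>
      cases q with
      | nil => exact Or.inl ⟨x, by simpa using h.symm⟩
      | cons => simp at h
    | app c us =>
      cases us with
      | nil =>
        cases q with
        | nil => exact Or.inr ⟨c, by simpa using h.symm⟩
        | cons => simp at h
      | cons a us =>
        have := height_lt_of_mem (f := c) (List.mem_cons_self (a := a) (l := us))
        omega

theorem finite_setOf_isPos : ∀ u : Tm F V, {p | u.IsPos p}.Finite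
  | var x => (Set.finite_singleton []).subset fun p hp => by
      cases p <;> simp_all [IsPos]
  | app f ts => by
    have hsub : {p | (app f ts).IsPos p} ⊆
        insert [] (⋃ i : Fin ts.length, List.cons i.1 '' {p | ts[i].IsPos p}) := by
      rintro (_ | ⟨i, p⟩) hp
      · exact Set.mem_insert _ _
      · simp only [Set.mem_ofPred_eq, IsPos, subAt_app_cons, Option.isSome_bind] at hp
        obtain ⟨hi, hp⟩ : ∃ hi : i < ts.length, (ts[i].subAt p).isSome := by
          by_cases hi : i < ts.length <;> simp_all
        exact Set.mem_insert_of_mem _ (Set.mem_iUnion.2 ⟨⟨i, hi⟩, p, hp, rfl⟩)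
    refine ((Set.finite_iUnion fun i => ?_).insert []).subset hsub
    exact (finite_setOf_isPos ts[i]).image _
termination_by u => u
decreasing_by have := List.sizeOf_lt_of_mem (List.getElem_mem i.2); simp; omega

end Tm

theorem Set.ncard_le_ncard_of_rel {α β : Type*} {A : Set α} {B : Set β} (P : α → β → Prop)
    (hB : B.Finite) (hex : ∀ a ∈ A, ∃ b ∈ B, P a b)
    (hinj : ∀ a ∈ A, ∀ a' ∈ A, ∀ b, P a b → P a' b → a = a') : A.ncard ≤ B.ncard := by
  choose g hgB hgP using hex
  have := hB.to_subtype
  rw [← Nat.card_coe_set_eq, ← Nat.card_coe_set_eq]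
  refine Nat.card_le_card_of_injective (fun a => ⟨g a a.2, hgB a a.2⟩) fun a a' h => ?_
  have h : g a a.2 = g a' a'.2 := congrArg Subtype.val h
  exact Subtype.ext (hinj a a.2 a' a'.2 _ (hgP a a.2) (h ▸ hgP a' a'.2))

section NonConstPositions

variable {F V : Type} {R : Set (Rule F V)}

theorem fromConst_const (R : Set (Rule F V)) (c : F) : FromConst R (Tm.app c []) :=
  ⟨c, .refl⟩

theorem FromConst.of_rew {u v : Tm F V} (hu : FromConst R u) (h : Rew R u v) :
    FromConst R v :=
  let ⟨c, hc⟩ := hu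
  ⟨c, hc.tail h⟩

def nonConstPos (R : Set (Rule F V)) (u : Tm F V) : Set (List ℕ) :=
  {p | ∃ w, u.subAt p = some w ∧ ¬ FromConst R w}

theorem meas_eq_ncard (R : Set (Rule F V)) (u : Tm F V) :
    meas R u = (nonConstPos R u).ncard :=
  Nat.card_coe_set_eq _

theorem finite_nonConstPos (R : Set (Rule F V)) (u : Tm F V) : (nonConstPos R u).Finite :=
  u.finite_setOf_isPos.subset fun p ⟨w, hw, _⟩ => by simp [Tm.IsPos, hw]

/-- Traces a position `p` of the contractum side of a step with `l → r` at `pbar` back to a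
position `p'` of the redex side carrying the same subterm: positions outside the redex stay
put, and positions inside the instance of a variable `x` of `r` move to an occurrence of `x`
in `l`. -/
def TraceBack (l r : Tm F V) (pbar p p' : List ℕ) : Prop :=
  (p' = p ∧ ¬ StrictBelow pbar p) ∨
    ∃ qv q₀ p₁ x, r.subAt qv = some (.var x) ∧ l.subAt q₀ = some (.var x) ∧
      p = pbar ++ qv ++ p₁ ∧ p' = pbar ++ q₀ ++ p₁

theorem strictBelow_append_of_subAt_var {l : Tm F V} (hl : ∀ x, l ≠ .var x)
    {pbar q₀ p₁ : List ℕ} {x : V} (h : l.subAt q₀ = some (.var x)) :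
    StrictBelow pbar (pbar ++ q₀ ++ p₁) :=
  ⟨q₀ ++ p₁, by simp [Tm.ne_nil_of_subAt_var hl h], by simp⟩

theorem TraceBack.inj {l r : Tm F V} (hl : ∀ x, l ≠ .var x) (hr : r.Linear)
    {pbar p p' b : List ℕ} (h : TraceBack l r pbar p b) (h' : TraceBack l r pbar p' b) :
    p = p' := by
  rcases h with ⟨rfl, hp⟩ | ⟨qv, q₀, p₁, x, hqv, hq₀, rfl, rfl⟩ <;>
    rcases h' with ⟨hb, hp'⟩ | ⟨qv', q₀', p₁', x', hqv', hq₀', rfl, hb⟩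
  · exact hb
  · exact absurd (hb ▸ strictBelow_append_of_subAt_var hl hq₀') hp
  · exact absurd (hb ▸ strictBelow_append_of_subAt_var hl hq₀) hp'
  · simp only [List.append_assoc, List.append_cancel_left_eq] at hb
    obtain rfl : q₀ = q₀' := by
      rcases List.prefix_or_prefix_of_prefix (List.prefix_append q₀ p₁)
          (hb ▸ List.prefix_append q₀' p₁') with hpre | hpre
      · exact Tm.eq_of_subAt_var_of_prefix hq₀ hq₀' hpre
      · exact (Tm.eq_of_subAt_var_of_prefix hq₀' hq₀ hpre).symm
    obtain rfl : p₁ = p₁' := List.append_cancel_left hb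
    obtain rfl : x = x' := by simpa [hq₀] using hq₀'
    rw [hr.eq_of_subAt_var hqv hqv']

variable {l r s t : Tm F V} {pbar : List ℕ} {σ : V → Tm F V}

theorem mem_nonConstPos_of_not_strictBelow (hrule : ⟨l, r⟩ ∈ R)
    (hstep : RewWith l r pbar σ s t) {p : List ℕ} (hp : p ∈ nonConstPos R t)
    (hbelow : ¬ StrictBelow pbar p) : p ∈ nonConstPos R s := by
  obtain ⟨w, hw, hwc⟩ := hp
  by_cases hpre : p <+: pbar
  · obtain ⟨d, rfl⟩ := hpre
    obtain ⟨u, hu, hud⟩ := Option.bind_eq_some_iff.1 (Tm.subAt_append s p d ▸ hstep.1)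
    obtain ⟨w', hw', htp⟩ := Tm.replAt_append hstep.2 hu
    obtain rfl : w = w' := Option.some_injective _ (hw.symm.trans htp)
    exact ⟨u, hu, fun hc => hwc (hc.of_rew ⟨d, _, hrule, σ, hud, hw'⟩)⟩
  · have hnot : ¬ pbar <+: p := by
      rintro ⟨q, rfl⟩
      rcases eq_or_ne q [] with rfl | hq
      · exact hpre (by simp)
      · exact hbelow ⟨q, hq, rfl⟩
    exact ⟨w, Tm.subAt_replAt_of_not_prefix hstep.2 hnot hpre ▸ hw, hwc⟩

/-- Flatness of `r` is what rules out non-variable positions: they carry constants. -/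
theorem exists_subAt_var_of_strictBelow (hflat : r.Flat) (hstep : RewWith l r pbar σ s t)
    {p : List ℕ} (hp : p ∈ nonConstPos R t) (hbelow : StrictBelow pbar p) :
    ∃ qv x p₁, p = pbar ++ qv ++ p₁ ∧ r.subAt qv = some (.var x) ∧
      (σ x).subAt p₁ = t.subAt p := by
  obtain ⟨q, hq, rfl⟩ := hbelow
  obtain ⟨w, hw, hwc⟩ := hp
  have hpbar := Tm.subAt_append_of_subAt (Tm.subAt_of_replAt hstep.2) q
  rw [hpbar] at hw ⊢
  rcases Tm.subAt_subst_eq_some σ hw with ⟨v, hv, rfl⟩ | ⟨qv, x, p₁, rfl, hqv, hx⟩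
  · rcases hflat.subAt_of_ne_nil hq hv with ⟨x, rfl⟩ | ⟨c, rfl⟩
    · exact ⟨q, x, [], by simp, hv, by simpa using hw.symm⟩
    · exact absurd (fromConst_const R c) (by simpa using hwc)
  · exact ⟨qv, x, p₁, by simp, hqv, hx.trans hw.symm⟩

theorem exists_traceBack (hrule : ⟨l, r⟩ ∈ R) (hwf : (⟨l, r⟩ : Rule F V).WF) (hflat : r.Flat)
    (hstep : RewWith l r pbar σ s t) {i : ℕ} {li : Tm F V} (hli : l.subAt [i] = some li)
    (hlv : ∀ x, li ≠ .var x) :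
    ∀ p ∈ nonConstPos R t, ∃ p' ∈ nonConstPos R s \ {pbar ++ [i]}, TraceBack l r pbar p p' := by
  intro p hp
  by_cases hbelow : StrictBelow pbar p
  · obtain ⟨qv, x, p₁, rfl, hqv, hx⟩ := exists_subAt_var_of_strictBelow hflat hstep hp hbelow
    obtain ⟨q₀, hq₀⟩ := Tm.exists_subAt_of_mem_varList (hwf.2 x (Tm.mem_varList_of_subAt hqv))
    refine ⟨pbar ++ q₀ ++ p₁, ⟨?_, ?_⟩, .inr ⟨qv, q₀, p₁, x, hqv, hq₀, rfl, rfl⟩⟩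
    · obtain ⟨w, hw, hwc⟩ := hp
      exact ⟨w, by rw [Tm.subAt_append_of_subAt_subst hstep.1 hq₀, hx, hw], hwc⟩
    · intro heq
      simp only [Set.mem_singleton_iff, List.append_assoc, List.append_cancel_left_eq,
        List.append_eq_singleton_iff] at heq
      rcases heq with ⟨rfl, -⟩ | ⟨rfl, -⟩
      · exact Tm.ne_nil_of_subAt_var hwf.1 hq₀ rfl
      · exact hlv x (Option.some_injective _ (hli.symm.trans hq₀))
  · exact ⟨p, ⟨mem_nonConstPos_of_not_strictBelow hrule hstep hp hbelow,
      fun h => hbelow ⟨[i], by simp, h⟩⟩, .inl ⟨rfl, hbelow⟩⟩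

theorem meas_lt_of_rewWith (hrule : ⟨l, r⟩ ∈ R) (hwf : (⟨l, r⟩ : Rule F V).WF)
    (hflat : r.Flat) (hlin : r.Linear) (hstep : RewWith l r pbar σ s t) {i : ℕ}
    {si li : Tm F V} (hsi : s.subAt (pbar ++ [i]) = some si) (hsic : ¬ FromConst R si)
    (hli : l.subAt [i] = some li) (hlv : ∀ x, li ≠ .var x) : meas R t < meas R s := by
  rw [meas_eq_ncard, meas_eq_ncard]
  calc (nonConstPos R t).ncard ≤ (nonConstPos R s \ {pbar ++ [i]}).ncard :=
        Set.ncard_le_ncard_of_rel (TraceBack l r pbar) (finite_nonConstPos R s).sdiff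
          (exists_traceBack hrule hwf hflat hstep hli hlv)
          fun _ _ _ _ _ h h' => h.inj hwf.1 hlin h'
    _ < (nonConstPos R s).ncard :=
        Set.ncard_sdiff_singleton_lt_of_mem ⟨si, hsi, hsic⟩ (finite_nonConstPos R s)

end NonConstPositions

theorem stmt8_general {F V : Type} (R : Set (Rule F V))
    (hR : ∀ r ∈ R, r.RightFlat ∧ r.RightLinear) (hRwf : ∀ r ∈ R, r.WF)
    (s t : Tm F V) (pbar : List ℕ) (f : F) (ss ls : List (Tm F V)) (r : Tm F V)
    (σ : V → Tm F V)
    (hrule : (⟨Tm.app f ls, r⟩ : Rule F V) ∈ R)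
    (hsub : s.subAt pbar = some (Tm.app f ss))
    (hstep : RewWith (Tm.app f ls) r pbar σ s t)
    (hmeas : meas R s = meas R t) :
    ∀ (i : ℕ) (si li : Tm F V), ss[i]? = some si → ls[i]? = some li →
      ¬ FromConst R si → ∃ x : V, li = Tm.var x := by
  intro i si li hsi hli hsic
  by_contra! hlv
  obtain ⟨hflat, hlin⟩ := hR _ hrule
  have hlt := meas_lt_of_rewWith hrule (hRwf _ hrule) hflat hlin hstep (i := i)
    (by simp [Tm.subAt_append_of_subAt hsub, hsi]) hsic (by simp [hli]) hlv
  omega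

/-- If `s = s[f(s₁,…,s_m)]_{p̄}` rewrites to `t` at `p̄` with rule
`f(l₁,…,l_m) → r` of a right-flat right-linear TRS and `‖s‖ = ‖t‖`, then whenever `sᵢ`
is not reachable from a constant, `lᵢ` is a variable. -/
theorem stmt8 {F V : Type} (R : Set (Rule F V))
    (hR : ∀ r ∈ R, r.RightFlat ∧ r.RightLinear) (hRwf : ∀ r ∈ R, r.WF)
    (s t : Tm F V) (pbar : List ℕ) (f : F) (ss ls : List (Tm F V)) (r : Tm F V)
    (σ : V → Tm F V)
    (hrule : (⟨Tm.app f ls, r⟩ : Rule F V) ∈ R)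
    (hsub : s.subAt pbar = some (Tm.app f ss))
    (hmatch : ss = ls.map (Tm.subst σ))
    (hstep : RewWith (Tm.app f ls) r pbar σ s t)
    (hmeas : meas R s = meas R t) :
    ∀ (i : ℕ) (si li : Tm F V), ss[i]? = some si → ls[i]? = some li →
      ¬ FromConst R si → ∃ x : V, li = Tm.var x :=
  stmt8_general R hR hRwf s t pbar f ss ls r σ hrule hsub hstep hmeas
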